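/- arXiv:2301.13163 — 3 statements merged into one kernel-verified Lean document; each statement's English description precedes it below -/
import Mathlib

section
/- Let M = U Γ Y ᵀ where U = [U_k, Û] ∈ ℝ^{m×n} has orthonormal columns, Γ = diag(Γ_k, Γ̂) is diagonal with nonnegative entries, and Y = [Y_k, Ŷ] ∈ ℝ^{n×n}. Let Y = HT be a QR factorization with H = [H_k, Ĥ] orthonormal and T block upper triangular with blocks T_k, T₁₂, T₂₂. Then M(I − H_k H_kᵀ) = Û Γ̂ T₂₂ᵀ Ĥᵀ, and consequently ‖M(I − H_k H_kᵀ)‖₂ ≤ ‖Γ̂‖₂ · ‖T₂₂‖₂. -/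
open Matrix

/-- Spectral norm (operator 2-norm) of a real matrix. -/
noncomputable def spec {m n : Type*} [Fintype m] [Fintype n] [DecidableEq m] [DecidableEq n]
    (A : Matrix m n ℝ) : ℝ :=
  ‖LinearMap.toContinuousLinearMap (Matrix.toEuclideanLin A)‖

/-!
Since `Y = H T`, we have `M = U Γ Tᵀ Hᵀ`, and orthonormality of the columns of `H = [H_k, Ĥ]`
gives `Hᵀ (I - H_k H_kᵀ) = [0; Ĥᵀ]`. Because `Γ` is block diagonal and `Tᵀ` block lower
triangular, both map a block column `[0; X]` to a block column of the same shape, so only the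
lower-right blocks survive: `M (I - H_k H_kᵀ) = Û Γ̂ T₂₂ᵀ Ĥᵀ`. The bound follows by
submultiplicativity, since `Û` and `Ĥᵀ` have spectral norm at most `1`.
-/

namespace Matrix

section Blocks

variable {R : Type*} [CommRing R] {l m n k r : Type*}

theorem transpose_fromCols_mul_fromCols_eq_one_iff [DecidableEq k] [DecidableEq r] [Fintype m]
    (A : Matrix m k R) (B : Matrix m r R) :
    (fromCols A B)ᵀ * fromCols A B = 1 ↔
      Aᵀ * A = 1 ∧ Aᵀ * B = 0 ∧ Bᵀ * A = 0 ∧ Bᵀ * B = 1 := by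
  rw [transpose_fromCols, fromRows_mul_fromCols, ← fromBlocks_one, fromBlocks_inj]

theorem transpose_fromCols_mul_one_sub_mul_transpose [DecidableEq m] [DecidableEq k]
    [Fintype m] [Fintype k] {A : Matrix m k R} {B : Matrix m r R}
    (hAA : Aᵀ * A = 1) (hBA : Bᵀ * A = 0) :
    (fromCols A B)ᵀ * (1 - A * Aᵀ) = fromRows 0 Bᵀ := by
  rw [transpose_fromCols, fromRows_mul, Matrix.mul_sub, Matrix.mul_sub, ← Matrix.mul_assoc,
    ← Matrix.mul_assoc, hAA, hBA]
  simp only [Matrix.mul_one, Matrix.one_mul, Matrix.zero_mul, sub_self, sub_zero]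

theorem fromBlocks_mul_fromRows_zero [Fintype k] [Fintype r] (A : Matrix l k R)
    (C : Matrix m k R) (D : Matrix m r R) (X : Matrix r n R) :
    fromBlocks A 0 C D * fromRows (0 : Matrix k n R) X = fromRows 0 (D * X) := by
  simp only [fromBlocks_mul_fromRows, Matrix.mul_zero, Matrix.zero_mul, add_zero, zero_add]

theorem fromCols_mul_fromRows_zero [Fintype k] [Fintype r] (A : Matrix m k R) (B : Matrix m r R)
    (X : Matrix r n R) :
    fromCols A B * fromRows (0 : Matrix k n R) X = B * X := by
  rw [fromCols_mul_fromRows, Matrix.mul_zero, zero_add]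

end Blocks

end Matrix

open scoped Matrix.Norms.L2Operator

section SpectralNorm

variable {l m n : Type*} [Fintype l] [Fintype m] [Fintype n]
  [DecidableEq l] [DecidableEq m] [DecidableEq n]

theorem spec_nonneg (A : Matrix m n ℝ) : 0 ≤ spec A := norm_nonneg _

theorem spec_mul_le (A : Matrix l m ℝ) (B : Matrix m n ℝ) : spec (A * B) ≤ spec A * spec B :=
  l2_opNorm_mul A B

theorem spec_transpose (A : Matrix m n ℝ) : spec Aᵀ = spec A :=
  l2_opNorm_conjTranspose A

theorem spec_le_one_of_transpose_mul_self_eq_one {A : Matrix m n ℝ} (h : Aᵀ * A = 1) :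
    spec A ≤ 1 := by
  have hsq : spec A * spec A = spec (1 : Matrix n n ℝ) := by
    rw [← h]; exact (l2_opNorm_conjTranspose_mul_self A).symm
  have hone : spec (1 : Matrix n n ℝ) ≤ 1 := by
    rw [← diagonal_one]
    exact (l2_opNorm_diagonal _).trans_le (pi_norm_const_le _ |>.trans norm_one.le)
  nlinarith [spec_nonneg A]

theorem spec_mul_mul_mul_transpose_le {p q : Type*} [Fintype p] [Fintype q]
    [DecidableEq p] [DecidableEq q] {U : Matrix l m ℝ} {V : Matrix q p ℝ}
    (hU : Uᵀ * U = 1) (hV : Vᵀ * V = 1) (D : Matrix m n ℝ) (E : Matrix n p ℝ) :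
    spec (U * D * E * Vᵀ) ≤ spec D * spec E := by
  have hU1 := spec_le_one_of_transpose_mul_self_eq_one hU
  have hV1 : spec Vᵀ ≤ 1 := spec_transpose V ▸ spec_le_one_of_transpose_mul_self_eq_one hV
  calc spec (U * D * E * Vᵀ)
      ≤ spec (U * D * E) * spec Vᵀ := spec_mul_le _ _
    _ ≤ spec (U * D * E) := mul_le_of_le_one_right (spec_nonneg _) hV1
    _ ≤ spec (U * D) * spec E := spec_mul_le _ _
    _ ≤ spec D * spec E := by
        gcongr
        · exact spec_nonneg E
        · exact (spec_mul_le U D).trans (mul_le_of_le_one_left (spec_nonneg D) hU1)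

end SpectralNorm

theorem projected_residual_formula_general {m n k r : ℕ}
    (Uk : Matrix (Fin m) (Fin k) ℝ) (Uhat : Matrix (Fin m) (Fin r) ℝ)
    (U : Matrix (Fin m) (Fin k ⊕ Fin r) ℝ) (hU : U = fromCols Uk Uhat)
    (hUorth : Uᵀ * U = 1)
    (gk : Fin k → ℝ) (gh : Fin r → ℝ)
    (Γ : Matrix (Fin k ⊕ Fin r) (Fin k ⊕ Fin r) ℝ)
    (hΓ : Γ = fromBlocks (Matrix.diagonal gk) 0 0 (Matrix.diagonal gh))
    (Y : Matrix (Fin n) (Fin k ⊕ Fin r) ℝ)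
    (Hk : Matrix (Fin n) (Fin k) ℝ) (Hhat : Matrix (Fin n) (Fin r) ℝ)
    (H : Matrix (Fin n) (Fin k ⊕ Fin r) ℝ) (hH : H = fromCols Hk Hhat)
    (hHorth : Hᵀ * H = 1)
    (Tk : Matrix (Fin k) (Fin k) ℝ) (T12 : Matrix (Fin k) (Fin r) ℝ)
    (T22 : Matrix (Fin r) (Fin r) ℝ)
    (T : Matrix (Fin k ⊕ Fin r) (Fin k ⊕ Fin r) ℝ)
    (hT : T = fromBlocks Tk T12 0 T22)
    (hQR : Y = H * T)
    (M : Matrix (Fin m) (Fin n) ℝ) (hM : M = U * Γ * Yᵀ) :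
    M * (1 - Hk * Hkᵀ) = Uhat * Matrix.diagonal gh * T22ᵀ * Hhatᵀ ∧
    spec (M * (1 - Hk * Hkᵀ)) ≤ spec (Matrix.diagonal gh) * spec T22 := by
  obtain ⟨hkk, -, hhk, hhh⟩ :=
    (transpose_fromCols_mul_fromCols_eq_one_iff Hk Hhat).mp (hH ▸ hHorth)
  obtain ⟨-, -, -, hUhh⟩ :=
    (transpose_fromCols_mul_fromCols_eq_one_iff Uk Uhat).mp (hU ▸ hUorth)
  have hres : M * (1 - Hk * Hkᵀ) = Uhat * diagonal gh * T22ᵀ * Hhatᵀ :=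
    calc M * (1 - Hk * Hkᵀ) = U * (Γ * (Tᵀ * (Hᵀ * (1 - Hk * Hkᵀ)))) := by
          rw [hM, hQR, transpose_mul]
          simp only [Matrix.mul_assoc]
      _ = Uhat * diagonal gh * T22ᵀ * Hhatᵀ := by
          rw [hH, transpose_fromCols_mul_one_sub_mul_transpose hkk hhk, hT, fromBlocks_transpose,
            transpose_zero, fromBlocks_mul_fromRows_zero, hΓ, fromBlocks_mul_fromRows_zero, hU,
            fromCols_mul_fromRows_zero]
          simp only [Matrix.mul_assoc]
  refine ⟨hres, ?_⟩
  rw [hres, ← spec_transpose T22]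
  exact spec_mul_mul_mul_transpose_le hUhh hhh _ _

/-- with M = U Γ Yᵀ, U = [U_k, Û] orthonormal columns,
Γ = diag(Γ_k, Γ̂) nonnegative diagonal, and QR factorization Y = H T,
one has M (I − H_k H_kᵀ) = Û Γ̂ T₂₂ᵀ Ĥᵀ and
‖M (I − H_k H_kᵀ)‖₂ ≤ ‖Γ̂‖₂ ‖T₂₂‖₂. -/
theorem projected_residual_formula {m n k r : ℕ}
    (Uk : Matrix (Fin m) (Fin k) ℝ) (Uhat : Matrix (Fin m) (Fin r) ℝ)
    (U : Matrix (Fin m) (Fin k ⊕ Fin r) ℝ) (hU : U = fromCols Uk Uhat)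
    (hUorth : Uᵀ * U = 1)
    (gk : Fin k → ℝ) (gh : Fin r → ℝ)
    (hgk : ∀ i, 0 ≤ gk i) (hgh : ∀ i, 0 ≤ gh i)
    (Γ : Matrix (Fin k ⊕ Fin r) (Fin k ⊕ Fin r) ℝ)
    (hΓ : Γ = fromBlocks (Matrix.diagonal gk) 0 0 (Matrix.diagonal gh))
    (Y : Matrix (Fin n) (Fin k ⊕ Fin r) ℝ)
    (Hk : Matrix (Fin n) (Fin k) ℝ) (Hhat : Matrix (Fin n) (Fin r) ℝ)
    (H : Matrix (Fin n) (Fin k ⊕ Fin r) ℝ) (hH : H = fromCols Hk Hhat)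
    (hHorth : Hᵀ * H = 1)
    (Tk : Matrix (Fin k) (Fin k) ℝ) (T12 : Matrix (Fin k) (Fin r) ℝ)
    (T22 : Matrix (Fin r) (Fin r) ℝ)
    (T : Matrix (Fin k ⊕ Fin r) (Fin k ⊕ Fin r) ℝ)
    (hT : T = fromBlocks Tk T12 0 T22)
    (hQR : Y = H * T)
    (M : Matrix (Fin m) (Fin n) ℝ) (hM : M = U * Γ * Yᵀ) :
    M * (1 - Hk * Hkᵀ) = Uhat * Matrix.diagonal gh * T22ᵀ * Hhatᵀ ∧
    spec (M * (1 - Hk * Hkᵀ)) ≤ spec (Matrix.diagonal gh) * spec T22 :=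
  projected_residual_formula_general Uk Uhat U hU hUorth gk gh Γ hΓ Y Hk Hhat H hH hHorth Tk T12 T22
    T hT hQR M hM
end

section
/- Suppose A = U Γ Yᵀ and B = V Σ Yᵀ where U, V have orthonormal columns, Γ, Σ are diagonal with Γᵀ Γ + Σᵀ Σ = I (entries in [0,1]), and Y ∈ ℝ^{n×n}. Then ‖Y‖₂ ≤ ‖A‖₂ + ‖B‖₂. -/
open Matrix

open scoped Matrix.Norms.L2Operator

lemma spec_eq_l2 {m n : Type*} [Fintype m] [Fintype n] [DecidableEq m] [DecidableEq n]
    (A : Matrix m n ℝ) : spec A = ‖A‖ := rfl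

lemma norm_diagonal_le_one {n : Type*} [Fintype n] [DecidableEq n]
    (g : n → ℝ) (h : ∀ i, |g i| ≤ 1) : ‖Matrix.diagonal g‖ ≤ 1 := by
  rw [Matrix.l2_opNorm_def]
  refine ContinuousLinearMap.opNorm_le_bound _ zero_le_one fun x => ?_
  rw [one_mul]
  have hx : ∀ y : EuclideanSpace ℝ n, ‖y‖ = Real.sqrt (∑ i, ‖y i‖ ^ 2) :=
    fun y => EuclideanSpace.norm_eq y
  show ‖Matrix.toEuclideanLin (Matrix.diagonal g) x‖ ≤ ‖x‖
  rw [hx, hx x]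
  apply Real.sqrt_le_sqrt
  apply Finset.sum_le_sum
  intro i _
  have : (Matrix.toEuclideanLin (Matrix.diagonal g) x) i = g i * x i := by
    simp [Matrix.toEuclideanLin_apply, Matrix.mulVec_diagonal]
  rw [this]
  have h1 : |g i * x i| ≤ |x i| := by
    rw [abs_mul]
    calc |g i| * |x i| ≤ 1 * |x i| := by
          exact mul_le_mul_of_nonneg_right (h i) (abs_nonneg _)
      _ = |x i| := one_mul _
  simp only [Real.norm_eq_abs]
  exact pow_le_pow_left₀ (abs_nonneg _) h1 2

lemma norm_orth_le_one {m n : Type*} [Fintype m] [Fintype n] [DecidableEq m] [DecidableEq n]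
    (U : Matrix m n ℝ) (hU : Uᵀ * U = 1) : ‖U‖ ≤ 1 := by
  have h1 : ‖Uᴴ * U‖ = ‖U‖ * ‖U‖ := Matrix.l2_opNorm_conjTranspose_mul_self U
  rw [Matrix.conjTranspose_eq_transpose_of_trivial, hU] at h1
  have hone : ‖(1 : Matrix n n ℝ)‖ ≤ 1 := by
    rw [← Matrix.diagonal_one]
    exact norm_diagonal_le_one _ fun i => by simp
  nlinarith [norm_nonneg U, h1 ▸ hone]

lemma normTransposeAux {m n : Type*} [Fintype m] [Fintype n] [DecidableEq m] [DecidableEq n]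
    (A : Matrix m n ℝ) : ‖Aᵀ‖ = ‖A‖ := by
  rw [← Matrix.conjTranspose_eq_transpose_of_trivial, Matrix.l2_opNorm_conjTranspose]

/-- for a GSVD A = U Γ Yᵀ, B = V Σ Yᵀ with ΓᵀΓ + ΣᵀΣ = I,
one has ‖Y‖₂ ≤ ‖A‖₂ + ‖B‖₂. -/
theorem gsvd_Y_norm_bound {m d n : ℕ}
    (A : Matrix (Fin m) (Fin n) ℝ) (B : Matrix (Fin d) (Fin n) ℝ)
    (U : Matrix (Fin m) (Fin n) ℝ) (V : Matrix (Fin d) (Fin n) ℝ)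
    (hU : Uᵀ * U = 1) (hV : Vᵀ * V = 1)
    (g b : Fin n → ℝ)
    (hg0 : ∀ i, 0 ≤ g i) (hg1 : ∀ i, g i ≤ 1)
    (hb0 : ∀ i, 0 ≤ b i) (hb1 : ∀ i, b i ≤ 1)
    (hnorm : ∀ i, g i ^ 2 + b i ^ 2 = 1)
    (Y : Matrix (Fin n) (Fin n) ℝ)
    (hA : A = U * Matrix.diagonal g * Yᵀ)
    (hB : B = V * Matrix.diagonal b * Yᵀ) :
    spec Y ≤ spec A + spec B := by
  simp only [spec_eq_l2]
  have hUA : Uᵀ * A = Matrix.diagonal g * Yᵀ := by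
    rw [hA, ← Matrix.mul_assoc, ← Matrix.mul_assoc, hU, Matrix.one_mul]
  have hVB : Vᵀ * B = Matrix.diagonal b * Yᵀ := by
    rw [hB, ← Matrix.mul_assoc, ← Matrix.mul_assoc, hV, Matrix.one_mul]
  have key : Yᵀ = Matrix.diagonal g * (Uᵀ * A) + Matrix.diagonal b * (Vᵀ * B) := by
    rw [hUA, hVB, ← Matrix.mul_assoc, ← Matrix.mul_assoc, Matrix.diagonal_mul_diagonal,
      Matrix.diagonal_mul_diagonal, ← Matrix.add_mul, Matrix.diagonal_add]
    have : (fun i => g i * g i + b i * b i) = fun _ : Fin n => (1 : ℝ) := by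
      funext i
      have := hnorm i
      nlinarith
    rw [this, Matrix.diagonal_one, Matrix.one_mul]
  have hgd : ‖Matrix.diagonal g‖ ≤ 1 :=
    norm_diagonal_le_one g fun i => abs_le.mpr ⟨by linarith [hg0 i], hg1 i⟩
  have hbd : ‖Matrix.diagonal b‖ ≤ 1 :=
    norm_diagonal_le_one b fun i => abs_le.mpr ⟨by linarith [hb0 i], hb1 i⟩
  have hUt : ‖Uᵀ‖ ≤ 1 := by rw [normTransposeAux]; exact norm_orth_le_one U hU
  have hVt : ‖Vᵀ‖ ≤ 1 := by rw [normTransposeAux]; exact norm_orth_le_one V hV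
  have bound1 : ‖Matrix.diagonal g * (Uᵀ * A)‖ ≤ ‖A‖ := by
    calc ‖Matrix.diagonal g * (Uᵀ * A)‖ ≤ ‖Matrix.diagonal g‖ * ‖Uᵀ * A‖ :=
          Matrix.l2_opNorm_mul _ _
      _ ≤ 1 * ‖Uᵀ * A‖ := mul_le_mul_of_nonneg_right hgd (norm_nonneg _)
      _ = ‖Uᵀ * A‖ := one_mul _
      _ ≤ ‖Uᵀ‖ * ‖A‖ := Matrix.l2_opNorm_mul _ _
      _ ≤ 1 * ‖A‖ := mul_le_mul_of_nonneg_right hUt (norm_nonneg _)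
      _ = ‖A‖ := one_mul _
  have bound2 : ‖Matrix.diagonal b * (Vᵀ * B)‖ ≤ ‖B‖ := by
    calc ‖Matrix.diagonal b * (Vᵀ * B)‖ ≤ ‖Matrix.diagonal b‖ * ‖Vᵀ * B‖ :=
          Matrix.l2_opNorm_mul _ _
      _ ≤ 1 * ‖Vᵀ * B‖ := mul_le_mul_of_nonneg_right hbd (norm_nonneg _)
      _ = ‖Vᵀ * B‖ := one_mul _
      _ ≤ ‖Vᵀ‖ * ‖B‖ := Matrix.l2_opNorm_mul _ _
      _ ≤ 1 * ‖B‖ := mul_le_mul_of_nonneg_right hVt (norm_nonneg _)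
      _ = ‖B‖ := one_mul _
  calc ‖Y‖ = ‖Yᵀ‖ := (normTransposeAux Y).symm
    _ = ‖Matrix.diagonal g * (Uᵀ * A) + Matrix.diagonal b * (Vᵀ * B)‖ := by rw [← key]
    _ ≤ ‖Matrix.diagonal g * (Uᵀ * A)‖ + ‖Matrix.diagonal b * (Vᵀ * B)‖ := norm_add_le _ _
    _ ≤ ‖A‖ + ‖B‖ := add_le_add bound1 bound2
end

section
/- Let A ∈ ℝ^{m×n} and Q ∈ ℝ^{m×s} have orthonormal columns, and set E = A − QQᵀA. Let γ̃ᵢ, β̃ᵢ and γᵢ, βᵢ be the generalized singular value pairs of (QQᵀA, B) and (A, B) respectively, with γᵢ² + βᵢ² = 1 = γ̃ᵢ² + β̃ᵢ². Then for each i, |γ̃ᵢ βᵢ − β̃ᵢ γᵢ| ≤ ‖E‖₂ · ‖[A; B]†‖₂, and in particular if β_{k+1} > 0, γ̃_{k+1} ≤ (γ_{k+1} + ‖E‖₂ · ‖[A; B]†‖₂) / β_{k+1}. -/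
open Matrix

/-- Moore–Penrose pseudoinverse, characterized by the four Penrose conditions. -/
def IsMoorePenrose {m n : Type*} [Fintype m] [Fintype n]
    (A : Matrix m n ℝ) (Ap : Matrix n m ℝ) : Prop :=
  A * Ap * A = A ∧ Ap * A * Ap = Ap ∧ (A * Ap)ᵀ = A * Ap ∧ (Ap * A)ᵀ = Ap * A

open Module Real

/-! For `v ≠ 0` the pair `(‖A v‖, ‖B v‖) / ‖[A; B] v‖` lies on the unit quarter circle, and
replacing `A` by `Ã = QQᵀA` moves it by the chordal distance
`‖B v‖ |‖A v‖ - ‖Ã v‖| / (‖[A; B] v‖ ‖[Ã; B] v‖) ≤ ‖E‖₂ ‖[A; B]†‖₂`, since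
`|‖A v‖ - ‖Ã v‖| ≤ ‖E v‖`, `‖B v‖ ≤ ‖[Ã; B] v‖` and `‖v‖ ≤ ‖[A; B]†‖₂ ‖[A; B] v‖`.
A dimension count gives, for each `i`, some `v ≠ 0` with `(Yᵀ v)ⱼ = 0` for `j > i` and
`(Ỹᵀ v)ⱼ = 0` for `j < i`; then the first pair has sine at most `βᵢ` and the second has sine at
least `β̃ᵢ`. As `β̃ γ - γ̃ β = sin (arcsin β̃ - arcsin β)` increases with `β̃` and decreases with `β`,
`β̃ᵢ γᵢ - γ̃ᵢ βᵢ` is at most that chordal distance; exchanging the two decompositions bounds the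
opposite sign. -/

lemma sin_arcsin_sub_arcsin {c s c' s' : ℝ} (hc : 0 ≤ c) (hc' : 0 ≤ c')
    (h : c ^ 2 + s ^ 2 = 1) (h' : c' ^ 2 + s' ^ 2 = 1) :
    sin (arcsin s' - arcsin s) = s' * c - c' * s := by
  have hsin : ∀ {c s : ℝ}, c ^ 2 + s ^ 2 = 1 → sin (arcsin s) = s := fun h =>
    sin_arcsin (by nlinarith) (by nlinarith)
  have hcos : ∀ {c s : ℝ}, 0 ≤ c → c ^ 2 + s ^ 2 = 1 → cos (arcsin s) = c := fun hc h => by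
    rw [cos_arcsin, ← h, add_sub_cancel_right, sqrt_sq hc]
  rw [sin_sub, hsin h, hsin h', hcos hc h, hcos hc' h']

lemma sub_mul_le_sub_mul_of_le {c s c' s' d t d' t' : ℝ} (hc : 0 ≤ c) (hc' : 0 ≤ c')
    (hd : 0 ≤ d) (hd' : 0 ≤ d') (hs' : 0 ≤ s') (ht : 0 ≤ t)
    (h : c ^ 2 + s ^ 2 = 1) (h' : c' ^ 2 + s' ^ 2 = 1)
    (k : d ^ 2 + t ^ 2 = 1) (k' : d' ^ 2 + t' ^ 2 = 1) (hts : t ≤ s) (hst : s' ≤ t') :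
    s' * c - c' * s ≤ t' * d - d' * t := by
  rw [← sin_arcsin_sub_arcsin hc hc' h h', ← sin_arcsin_sub_arcsin hd hd' k k']
  apply sin_le_sin_of_le_of_le_pi_div_two
  · linarith [arcsin_nonneg.mpr hs', arcsin_le_pi_div_two s]
  · linarith [arcsin_nonneg.mpr ht, arcsin_le_pi_div_two t']
  · linarith [arcsin_le_arcsin hts, arcsin_le_arcsin hst]

lemma monotone_of_mul_le_mul {ι : Type*} [Preorder ι] {c s : ι → ℝ} (hc : ∀ i, 0 ≤ c i)
    (hs : ∀ i, 0 ≤ s i) (h : ∀ i, c i ^ 2 + s i ^ 2 = 1)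
    (hord : ∀ i j, i ≤ j → c j * s i ≤ c i * s j) : Monotone s := by
  intro i j hij
  by_contra! hlt
  have hcij : c i < c j := by nlinarith [h i, h j, hc i, hc j, hs j]
  nlinarith [hord i j hij, mul_lt_mul_of_pos_right hcij (hs j |>.trans_lt hlt),
    mul_le_mul_of_nonneg_left hlt.le (hc i)]

section WeightedSum
variable {ι : Type*} [Fintype ι] [LinearOrder ι] {s y : ι → ℝ} {i : ι}

lemma sum_sq_mul_sq_le_of_forall_gt (hs : Monotone s) (hs0 : ∀ j, 0 ≤ s j)
    (hy : ∀ j, i < j → y j = 0) : ∑ j, s j ^ 2 * y j ^ 2 ≤ s i ^ 2 * ∑ j, y j ^ 2 := by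
  rw [Finset.mul_sum]
  refine Finset.sum_le_sum fun j _ => ?_
  rcases le_or_gt j i with hji | hij
  · exact mul_le_mul_of_nonneg_right (pow_le_pow_left₀ (hs0 j) (hs hji) 2) (sq_nonneg _)
  · simp [hy j hij]

lemma sq_mul_sum_sq_le_of_forall_lt (hs : Monotone s) (hs0 : ∀ j, 0 ≤ s j)
    (hy : ∀ j, j < i → y j = 0) : s i ^ 2 * ∑ j, y j ^ 2 ≤ ∑ j, s j ^ 2 * y j ^ 2 := by
  rw [Finset.mul_sum]
  refine Finset.sum_le_sum fun j _ => ?_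
  rcases lt_or_ge j i with hji | hij
  · simp [hy j hji]
  · exact mul_le_mul_of_nonneg_right (pow_le_pow_left₀ (hs0 i) (hs hij) 2) (sq_nonneg _)

end WeightedSum

lemma exists_ne_zero_forall_gt_forall_lt {K V ι : Type*} [Field K] [AddCommGroup V] [Module K V]
    [FiniteDimensional K V] [Fintype ι] [LinearOrder ι] (hV : Fintype.card ι ≤ finrank K V)
    (f g : ι → Dual K V) (i : ι) :
    ∃ x ≠ 0, (∀ j, i < j → f j x = 0) ∧ ∀ j, j < i → g j x = 0 := by
  let F : V →ₗ[K] ({j // j ≠ i} → K) := LinearMap.pi fun j => if i < j.1 then f j else g j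
  have hcard : finrank K ({j // j ≠ i} → K) < finrank K V := by
    rw [finrank_fintype_fun_eq_card]
    exact (Fintype.card_subtype_lt (x := i) (not_not.mpr rfl)).trans_le hV
  obtain ⟨x, hxF, hx⟩ :=
    Submodule.exists_mem_ne_zero_of_ne_bot (LinearMap.ker_ne_bot_of_finrank_lt hcard)
  have hF : ∀ j (hj : j ≠ i), (if i < j then f j else g j) x = 0 := fun j hj => by
    have hFx : F x = 0 := LinearMap.mem_ker.mp hxF
    simpa [F] using congrFun hFx ⟨j, hj⟩
  refine ⟨x, hx, fun j hj => ?_, fun j hj => ?_⟩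
  · simpa [hj] using hF j hj.ne'
  · simpa [hj.not_gt] using hF j hj.ne

section EuclideanNorms
variable {m d n : Type*} [Fintype m] [Fintype d] [Fintype n] [DecidableEq n]

lemma norm_toEuclideanLin_le_spec [DecidableEq m] (M : Matrix m n ℝ) (v : EuclideanSpace ℝ n) :
    ‖toEuclideanLin M v‖ ≤ spec M * ‖v‖ :=
  (LinearMap.toContinuousLinearMap (toEuclideanLin M)).le_opNorm v

lemma norm_toEuclideanLin_of_transpose_mul_self {U : Matrix m n ℝ} (hU : Uᵀ * U = 1)
    (v : EuclideanSpace ℝ n) : ‖toEuclideanLin U v‖ = ‖v‖ := by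
  classical
  have h : (toEuclideanLin U).adjoint ∘ₗ toEuclideanLin U = LinearMap.id := by
    rw [← toEuclideanLin_conjTranspose_eq_adjoint, conjTranspose_eq_transpose_of_trivial,
      ← toLpLin_mul_same, hU, toLpLin_one]
  rw [← sq_eq_sq₀ (norm_nonneg _) (norm_nonneg _), ← real_inner_self_eq_norm_sq,
    ← real_inner_self_eq_norm_sq, ← LinearMap.adjoint_inner_left, ← LinearMap.comp_apply, h,
    LinearMap.id_apply]

lemma norm_sq_toEuclideanLin_diagonal (c : n → ℝ) (v : EuclideanSpace ℝ n) :
    ‖toEuclideanLin (diagonal c) v‖ ^ 2 = ∑ j, c j ^ 2 * v j ^ 2 := by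
  simp [EuclideanSpace.real_norm_sq_eq, toLpLin_apply, mulVec_diagonal, mul_pow]

lemma norm_sq_toEuclideanLin_mul_diagonal_mul {k : Type*} [Fintype k] [DecidableEq k]
    {U : Matrix m n ℝ} (hU : Uᵀ * U = 1) (c : n → ℝ) (W : Matrix n k ℝ)
    (v : EuclideanSpace ℝ k) :
    ‖toEuclideanLin (U * diagonal c * W) v‖ ^ 2 = ∑ j, c j ^ 2 * toEuclideanLin W v j ^ 2 := by
  rw [toLpLin_mul_same, toLpLin_mul_same, LinearMap.comp_apply, LinearMap.comp_apply,
    norm_toEuclideanLin_of_transpose_mul_self hU, norm_sq_toEuclideanLin_diagonal]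

lemma norm_sq_toEuclideanLin_fromRows (A : Matrix m n ℝ) (B : Matrix d n ℝ)
    (v : EuclideanSpace ℝ n) :
    ‖toEuclideanLin (fromRows A B) v‖ ^ 2 =
      ‖toEuclideanLin A v‖ ^ 2 + ‖toEuclideanLin B v‖ ^ 2 := by
  simp [EuclideanSpace.real_norm_sq_eq, toLpLin_apply, fromRows_mulVec, Fintype.sum_sum_type]

lemma norm_toEuclideanLin_le_fromRows (A : Matrix m n ℝ) (B : Matrix d n ℝ)
    (v : EuclideanSpace ℝ n) : ‖toEuclideanLin B v‖ ≤ ‖toEuclideanLin (fromRows A B) v‖ := by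
  refine le_of_sq_le_sq ?_ (norm_nonneg _)
  rw [norm_sq_toEuclideanLin_fromRows]
  exact le_add_of_nonneg_left (sq_nonneg _)

lemma injective_toEuclideanLin_of_isUnit {Y : Matrix n n ℝ} (hY : IsUnit Y) :
    Function.Injective (toEuclideanLin Y) := fun x y h =>
  WithLp.ofLp_injective 2 <| mulVec_injective_iff_isUnit.mpr hY <| by
    simpa [toLpLin_apply] using congrArg WithLp.ofLp h

lemma IsMoorePenrose.norm_le_spec_mul [DecidableEq m] {S : Matrix m n ℝ} {Sp : Matrix n m ℝ}
    (h : IsMoorePenrose S Sp) (hS : Function.Injective (toEuclideanLin S))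
    (v : EuclideanSpace ℝ n) : ‖v‖ ≤ spec Sp * ‖toEuclideanLin S v‖ := by
  have hv : toEuclideanLin Sp (toEuclideanLin S v) = v := hS <| by
    rw [← LinearMap.comp_apply, ← LinearMap.comp_apply, ← toLpLin_mul_same, ← toLpLin_mul_same,
      h.1]
  calc ‖v‖ = ‖toEuclideanLin Sp (toEuclideanLin S v)‖ := by rw [hv]
    _ ≤ spec Sp * ‖toEuclideanLin S v‖ := norm_toEuclideanLin_le_spec Sp _

lemma norm_mul_abs_norm_sub_norm_le [DecidableEq m] [DecidableEq d] {A : Matrix m n ℝ}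
    {B : Matrix d n ℝ} {Sp : Matrix n (m ⊕ d) ℝ} (hSp : IsMoorePenrose (fromRows A B) Sp)
    (hS : Function.Injective (toEuclideanLin (fromRows A B))) (A' : Matrix m n ℝ)
    (v : EuclideanSpace ℝ n) :
    ‖toEuclideanLin B v‖ * |‖toEuclideanLin A v‖ - ‖toEuclideanLin A' v‖| ≤
      spec (A - A') * spec Sp *
        (‖toEuclideanLin (fromRows A B) v‖ * ‖toEuclideanLin (fromRows A' B) v‖) := by
  have hdiff : |‖toEuclideanLin A v‖ - ‖toEuclideanLin A' v‖| ≤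
      spec (A - A') * spec Sp * ‖toEuclideanLin (fromRows A B) v‖ :=
    calc |‖toEuclideanLin A v‖ - ‖toEuclideanLin A' v‖|
        ≤ ‖toEuclideanLin (A - A') v‖ := by
          simpa only [map_sub, LinearMap.sub_apply] using abs_norm_sub_norm_le _ _
      _ ≤ spec (A - A') * ‖v‖ := norm_toEuclideanLin_le_spec _ v
      _ ≤ spec (A - A') * (spec Sp * ‖toEuclideanLin (fromRows A B) v‖) :=
          mul_le_mul_of_nonneg_left (hSp.norm_le_spec_mul hS v) (norm_nonneg _)
      _ = _ := by ring
  calc _ ≤ ‖toEuclideanLin (fromRows A' B) v‖ *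
        (spec (A - A') * spec Sp * ‖toEuclideanLin (fromRows A B) v‖) :=
        mul_le_mul (norm_toEuclideanLin_le_fromRows A' B v) hdiff (abs_nonneg _) (norm_nonneg _)
    _ = _ := by ring

end EuclideanNorms

/-- The pairs `(c i, s i)` are the generalized singular value pairs `(γᵢ, βᵢ)` of `(A, B)`,
ordered by nonincreasing `γᵢ / βᵢ`. -/
structure IsGSVD {m d ι : Type*} [Fintype m] [Fintype d] [Fintype ι] [LinearOrder ι]
    (A : Matrix m ι ℝ) (B : Matrix d ι ℝ) (U : Matrix m ι ℝ) (V : Matrix d ι ℝ)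
    (Y : Matrix ι ι ℝ) (c s : ι → ℝ) : Prop where
  isUnit : IsUnit Y
  transpose_mul_self_U : Uᵀ * U = 1
  transpose_mul_self_V : Vᵀ * V = 1
  nonneg_c : ∀ i, 0 ≤ c i
  nonneg_s : ∀ i, 0 ≤ s i
  sq_add_sq : ∀ i, c i ^ 2 + s i ^ 2 = 1
  mul_le_mul : ∀ i j, i ≤ j → c j * s i ≤ c i * s j
  eq_A : A = U * diagonal c * Yᵀ
  eq_B : B = V * diagonal s * Yᵀ

namespace IsGSVD
variable {m d ι : Type*} [Fintype m] [Fintype d] [Fintype ι] [LinearOrder ι]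
  {A : Matrix m ι ℝ} {B : Matrix d ι ℝ} {U : Matrix m ι ℝ} {V : Matrix d ι ℝ} {Y : Matrix ι ι ℝ}
  {c s : ι → ℝ}

lemma monotone_s (h : IsGSVD A B U V Y c s) : Monotone s :=
  monotone_of_mul_le_mul h.nonneg_c h.nonneg_s h.sq_add_sq h.mul_le_mul

lemma norm_sq_B (h : IsGSVD A B U V Y c s) (v : EuclideanSpace ℝ ι) :
    ‖toEuclideanLin B v‖ ^ 2 = ∑ j, s j ^ 2 * toEuclideanLin Yᵀ v j ^ 2 :=
  h.eq_B ▸ norm_sq_toEuclideanLin_mul_diagonal_mul h.transpose_mul_self_V s Yᵀ v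

lemma norm_fromRows (h : IsGSVD A B U V Y c s) (v : EuclideanSpace ℝ ι) :
    ‖toEuclideanLin (fromRows A B) v‖ = ‖toEuclideanLin Yᵀ v‖ := by
  rw [← sq_eq_sq₀ (norm_nonneg _) (norm_nonneg _), norm_sq_toEuclideanLin_fromRows, h.norm_sq_B,
    h.eq_A, norm_sq_toEuclideanLin_mul_diagonal_mul h.transpose_mul_self_U,
    EuclideanSpace.real_norm_sq_eq, ← Finset.sum_add_distrib]
  simp [← add_mul, h.sq_add_sq]

lemma injective_fromRows (h : IsGSVD A B U V Y c s) :
    Function.Injective (toEuclideanLin (fromRows A B)) := by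
  refine (injective_iff_map_eq_zero _).mpr fun v hv => ?_
  refine injective_toEuclideanLin_of_isUnit ((isUnit_transpose Y).mpr h.isUnit) ?_
  rw [map_zero, ← norm_eq_zero, ← h.norm_fromRows, hv, norm_zero]

lemma norm_B_le (h : IsGSVD A B U V Y c s) {i : ι} {v : EuclideanSpace ℝ ι}
    (hv : ∀ j, i < j → toEuclideanLin Yᵀ v j = 0) :
    ‖toEuclideanLin B v‖ ≤ s i * ‖toEuclideanLin (fromRows A B) v‖ := by
  refine le_of_sq_le_sq ?_ (mul_nonneg (h.nonneg_s i) (norm_nonneg _))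
  rw [h.norm_sq_B, mul_pow, h.norm_fromRows, EuclideanSpace.real_norm_sq_eq]
  exact sum_sq_mul_sq_le_of_forall_gt h.monotone_s h.nonneg_s hv

lemma le_norm_B (h : IsGSVD A B U V Y c s) {i : ι} {v : EuclideanSpace ℝ ι}
    (hv : ∀ j, j < i → toEuclideanLin Yᵀ v j = 0) :
    s i * ‖toEuclideanLin (fromRows A B) v‖ ≤ ‖toEuclideanLin B v‖ := by
  refine le_of_sq_le_sq ?_ (norm_nonneg _)
  rw [h.norm_sq_B, mul_pow, h.norm_fromRows, EuclideanSpace.real_norm_sq_eq]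
  exact sq_mul_sum_sq_le_of_forall_lt h.monotone_s h.nonneg_s hv

lemma mul_sub_mul_le {At : Matrix m ι ℝ} {Ut : Matrix m ι ℝ} {Vt : Matrix d ι ℝ}
    {Yt : Matrix ι ι ℝ} {ct st : ι → ℝ} (h : IsGSVD A B U V Y c s)
    (ht : IsGSVD At B Ut Vt Yt ct st) {ε : ℝ}
    (hε : ∀ v, ‖toEuclideanLin B v‖ * |‖toEuclideanLin A v‖ - ‖toEuclideanLin At v‖| ≤
      ε * (‖toEuclideanLin (fromRows A B) v‖ * ‖toEuclideanLin (fromRows At B) v‖))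
    (i : ι) : st i * c i - ct i * s i ≤ ε := by
  obtain ⟨v, hv0, hy, hyt⟩ := exists_ne_zero_forall_gt_forall_lt (K := ℝ)
    (V := EuclideanSpace ℝ ι) (by simp)
    (fun j => (EuclideanSpace.proj (𝕜 := ℝ) j).toLinearMap ∘ₗ toEuclideanLin Yᵀ)
    (fun j => (EuclideanSpace.proj (𝕜 := ℝ) j).toLinearMap ∘ₗ toEuclideanLin Ytᵀ) i
  set a := ‖toEuclideanLin A v‖
  set at' := ‖toEuclideanLin At v‖
  set b := ‖toEuclideanLin B v‖
  set r := ‖toEuclideanLin (fromRows A B) v‖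
  set rt := ‖toEuclideanLin (fromRows At B) v‖
  have hr : 0 < r := norm_pos_iff.mpr ((map_ne_zero_iff _ h.injective_fromRows).mpr hv0)
  have hrt : 0 < rt := norm_pos_iff.mpr ((map_ne_zero_iff _ ht.injective_fromRows).mpr hv0)
  have on_circle : ∀ {x ρ : ℝ}, 0 < ρ → ρ ^ 2 = x ^ 2 + b ^ 2 → (x / ρ) ^ 2 + (b / ρ) ^ 2 = 1 :=
    fun hρ hsq => by field_simp; linarith
  have hcross := sub_mul_le_sub_mul_of_le (h.nonneg_c i) (ht.nonneg_c i)
    (div_nonneg (norm_nonneg _) hr.le) (div_nonneg (norm_nonneg _) hrt.le) (ht.nonneg_s i)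
    (div_nonneg (norm_nonneg _) hr.le) (h.sq_add_sq i) (ht.sq_add_sq i)
    (on_circle hr (norm_sq_toEuclideanLin_fromRows A B v))
    (on_circle hrt (norm_sq_toEuclideanLin_fromRows At B v))
    ((div_le_iff₀ hr).mpr (h.norm_B_le hy)) ((le_div_iff₀ hrt).mpr (ht.le_norm_B hyt))
  calc st i * c i - ct i * s i ≤ b / rt * (a / r) - at' / rt * (b / r) := hcross
    _ = b * (a - at') / (r * rt) := by field_simp
    _ ≤ ε := by
      rw [div_le_iff₀ (mul_pos hr hrt)]
      exact (mul_le_mul_of_nonneg_left (le_abs_self _) (norm_nonneg _)).trans (hε v)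

end IsGSVD

theorem gsvd_perturbation_general {m d n s : ℕ}
    (A : Matrix (Fin m) (Fin n) ℝ) (B : Matrix (Fin d) (Fin n) ℝ)
    (Q : Matrix (Fin m) (Fin s) ℝ)
    (E : Matrix (Fin m) (Fin n) ℝ) (hE : E = A - Q * Qᵀ * A)
    -- GSVD of (A, B)
    (U : Matrix (Fin m) (Fin n) ℝ) (V : Matrix (Fin d) (Fin n) ℝ)
    (Y : Matrix (Fin n) (Fin n) ℝ) (hYunit : IsUnit Y)
    (hU : Uᵀ * U = 1) (hV : Vᵀ * V = 1)
    (g b : Fin n → ℝ)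
    (hg0 : ∀ i, 0 ≤ g i) (hb0 : ∀ i, 0 ≤ b i)
    (hnorm : ∀ i, g i ^ 2 + b i ^ 2 = 1)
    (hord : ∀ i j : Fin n, i ≤ j → g j * b i ≤ g i * b j)
    (hA : A = U * Matrix.diagonal g * Yᵀ)
    (hB : B = V * Matrix.diagonal b * Yᵀ)
    -- GSVD of (QQᵀA, B)
    (Ut : Matrix (Fin m) (Fin n) ℝ) (Vt : Matrix (Fin d) (Fin n) ℝ)
    (Yt : Matrix (Fin n) (Fin n) ℝ) (hYtunit : IsUnit Yt)
    (hUt : Utᵀ * Ut = 1) (hVt : Vtᵀ * Vt = 1)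
    (gt bt : Fin n → ℝ)
    (hgt0 : ∀ i, 0 ≤ gt i) (hbt0 : ∀ i, 0 ≤ bt i)
    (hnormt : ∀ i, gt i ^ 2 + bt i ^ 2 = 1)
    (hordt : ∀ i j : Fin n, i ≤ j → gt j * bt i ≤ gt i * bt j)
    (hAt : Q * Qᵀ * A = Ut * Matrix.diagonal gt * Ytᵀ)
    (hBt : B = Vt * Matrix.diagonal bt * Ytᵀ)
    -- pseudoinverse of the stacked matrix [A; B]
    (Sp : Matrix (Fin n) (Fin m ⊕ Fin d) ℝ)
    (hSp : IsMoorePenrose (fromRows A B) Sp) :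
    (∀ i : Fin n, |gt i * b i - bt i * g i| ≤ spec E * spec Sp) ∧
    (∀ i : Fin n, 0 < b i → gt i ≤ (g i + spec E * spec Sp) / b i) := by
  have hgsvd : IsGSVD A B U V Y g b := ⟨hYunit, hU, hV, hg0, hb0, hnorm, hord, hA, hB⟩
  have hgsvdt : IsGSVD (Q * Qᵀ * A) B Ut Vt Yt gt bt :=
    ⟨hYtunit, hUt, hVt, hgt0, hbt0, hnormt, hordt, hAt, hBt⟩
  have hpert := hE ▸ norm_mul_abs_norm_sub_norm_le hSp hgsvd.injective_fromRows (Q * Qᵀ * A)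
  have hchordal (i : Fin n) : |gt i * b i - bt i * g i| ≤ spec E * spec Sp := by
    have hle := hgsvd.mul_sub_mul_le hgsvdt hpert i
    have hge := hgsvdt.mul_sub_mul_le hgsvd (fun v => by
      rw [abs_sub_comm, mul_comm ‖toEuclideanLin (fromRows _ B) v‖]; exact hpert v) i
    exact abs_le.mpr ⟨by linarith, by linarith⟩
  refine ⟨hchordal, fun i hbi => (le_div_iff₀ hbi).mpr ?_⟩
  have hbt1 : bt i ≤ 1 := by nlinarith [hnormt i, hgt0 i]
  linarith [(abs_le.mp (hchordal i)).2, mul_le_mul_of_nonneg_right hbt1 (hg0 i)]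

/-- Sun's perturbation theorem specialized to F = 0: with
E = A − QQᵀA and generalized singular value pairs (γᵢ, βᵢ) of (A, B) and
(γ̃ᵢ, β̃ᵢ) of (QQᵀA, B), one has |γ̃ᵢ βᵢ − β̃ᵢ γᵢ| ≤ ‖E‖₂ ‖[A; B]†‖₂ for all i,
and γ̃ᵢ ≤ (γᵢ + ‖E‖₂ ‖[A; B]†‖₂)/βᵢ whenever βᵢ > 0. -/
theorem gsvd_perturbation {m d n s : ℕ}
    (A : Matrix (Fin m) (Fin n) ℝ) (B : Matrix (Fin d) (Fin n) ℝ)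
    (hArank : A.rank = n) (hBrank : B.rank = n)
    (Q : Matrix (Fin m) (Fin s) ℝ) (hQ : Qᵀ * Q = 1)
    (E : Matrix (Fin m) (Fin n) ℝ) (hE : E = A - Q * Qᵀ * A)
    -- GSVD of (A, B)
    (U : Matrix (Fin m) (Fin n) ℝ) (V : Matrix (Fin d) (Fin n) ℝ)
    (Y : Matrix (Fin n) (Fin n) ℝ) (hYunit : IsUnit Y)
    (hU : Uᵀ * U = 1) (hV : Vᵀ * V = 1)
    (g b : Fin n → ℝ)
    (hg0 : ∀ i, 0 ≤ g i) (hb0 : ∀ i, 0 ≤ b i)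
    (hnorm : ∀ i, g i ^ 2 + b i ^ 2 = 1)
    (hord : ∀ i j : Fin n, i ≤ j → g j * b i ≤ g i * b j)
    (hA : A = U * Matrix.diagonal g * Yᵀ)
    (hB : B = V * Matrix.diagonal b * Yᵀ)
    -- GSVD of (QQᵀA, B)
    (Ut : Matrix (Fin m) (Fin n) ℝ) (Vt : Matrix (Fin d) (Fin n) ℝ)
    (Yt : Matrix (Fin n) (Fin n) ℝ) (hYtunit : IsUnit Yt)
    (hUt : Utᵀ * Ut = 1) (hVt : Vtᵀ * Vt = 1)
    (gt bt : Fin n → ℝ)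
    (hgt0 : ∀ i, 0 ≤ gt i) (hbt0 : ∀ i, 0 ≤ bt i)
    (hnormt : ∀ i, gt i ^ 2 + bt i ^ 2 = 1)
    (hordt : ∀ i j : Fin n, i ≤ j → gt j * bt i ≤ gt i * bt j)
    (hAt : Q * Qᵀ * A = Ut * Matrix.diagonal gt * Ytᵀ)
    (hBt : B = Vt * Matrix.diagonal bt * Ytᵀ)
    -- pseudoinverse of the stacked matrix [A; B]
    (Sp : Matrix (Fin n) (Fin m ⊕ Fin d) ℝ)
    (hSp : IsMoorePenrose (fromRows A B) Sp) :
    (∀ i : Fin n, |gt i * b i - bt i * g i| ≤ spec E * spec Sp) ∧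
    (∀ i : Fin n, 0 < b i → gt i ≤ (g i + spec E * spec Sp) / b i) :=
  gsvd_perturbation_general A B Q E hE U V Y hYunit hU hV g b hg0 hb0 hnorm hord hA hB Ut Vt Yt
    hYtunit hUt hVt gt bt hgt0 hbt0 hnormt hordt hAt hBt Sp hSp
end
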